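/- Let G be a connected AT-free graph with nonadjacent vertices s,t such that N_G(s)∩N_G(t)=∅, let A ⊆ V(G)∖{s,t} with ({s}∪A)∩N_G[t]=∅, let H be the graph on V(G) with edge set E(G) ∪ {(s,a) : a ∈ N_G[A]}, and let S_1 be the unique minimal s,t-separator of H with S_1 ⊆ N_H(s). If A ⊆ C_s(G−S_1), then S_1 is a minimal s,t-separator of G and it is the unique minimal s,t-separator of G close to sA. -/

import Mathlib

variable {V : Type*}

/-- Reachability in `G` by a walk avoiding the vertex set `S`. -/
def ReachAvoid (G : SimpleGraph V) (S : Set V) (u v : V) : Prop :=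
  ∃ w : G.Walk u v, ∀ x ∈ w.support, x ∉ S

/-- The connected component of `G − S` containing `s`, as a subset of `V`. -/
def compOf (G : SimpleGraph V) (S : Set V) (s : V) : Set V :=
  {v | ReachAvoid G S s v}

/-- `S` is an `s,t`-separator of `G`. -/
def IsSep (G : SimpleGraph V) (s t : V) (S : Set V) : Prop :=
  s ∉ S ∧ t ∉ S ∧ ¬ ReachAvoid G S s t

/-- `S` is a minimal `s,t`-separator of `G`. -/
def IsMinSep (G : SimpleGraph V) (s t : V) (S : Set V) : Prop :=
  IsSep G s t S ∧ ∀ S' ⊂ S, ¬ IsSep G s t S'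

/-- The open neighborhood of a vertex set `X`. -/
def nbhd (G : SimpleGraph V) (X : Set V) : Set V :=
  {v | v ∉ X ∧ ∃ x ∈ X, G.Adj x v}

/-- The closed neighborhood of a vertex `v`. -/
def clNbhd (G : SimpleGraph V) (v : V) : Set V :=
  insert v (G.neighborSet v)

/-- `S` is a minimal `s,t`-separator close to `sA`. -/
def CloseTo (G : SimpleGraph V) (s t : V) (A : Set V) (S : Set V) : Prop :=
  IsMinSep G s t S ∧ A ⊆ compOf G S s ∧
    ∀ T, IsMinSep G s t T → T ≠ S → A ⊆ compOf G T s →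
      ¬ compOf G T s ⊆ compOf G S s

/-- `G` contains no asteroidal triple. -/
def IsATFree (G : SimpleGraph V) : Prop :=
  ¬ ∃ a b c : V, a ≠ b ∧ a ≠ c ∧ b ≠ c ∧
    ¬ G.Adj a b ∧ ¬ G.Adj a c ∧ ¬ G.Adj b c ∧
    (∃ w : G.Walk a b, ∀ x ∈ w.support, x ∉ clNbhd G c) ∧
    (∃ w : G.Walk a c, ∀ x ∈ w.support, x ∉ clNbhd G b) ∧
    (∃ w : G.Walk b c, ∀ x ∈ w.support, x ∉ clNbhd G a)

/-- `S` is an `A,B`-separator. -/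
def IsABSep (G : SimpleGraph V) (A B : Set V) (S : Set V) : Prop :=
  S ⊆ (A ∪ B)ᶜ ∧ ∀ a ∈ A, ∀ b ∈ B, ¬ ReachAvoid G S a b

/-- `S` is a minimal `A,B`-separator. -/
def IsMinABSep (G : SimpleGraph V) (A B S : Set V) : Prop :=
  IsABSep G A B S ∧ ∀ S' ⊂ S, ¬ IsABSep G A B S'

/-- `S` is a safe (connectivity-preserving) `A,B`-separator: removing `S`
leaves two distinct components, one containing `A` and one containing `B`. -/
def IsSafeSep (G : SimpleGraph V) (A B S : Set V) : Prop :=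
  S ⊆ (A ∪ B)ᶜ ∧ ∃ a b : V, a ∉ S ∧ b ∉ S ∧
    A ⊆ compOf G S a ∧ B ⊆ compOf G S b ∧
    Disjoint (compOf G S a) (compOf G S b)

/-- The induced subgraph on `X` is connected (any two vertices of `X` are joined
by a walk staying in `X`). -/
def ConnIn (G : SimpleGraph V) (X : Set V) : Prop :=
  ∀ x ∈ X, ∀ y ∈ X, ∃ w : G.Walk x y, ∀ z ∈ w.support, z ∈ X

/-- The graph obtained from `G` by contracting `{s} ∪ A` to the vertex `s`
(the vertices of `A` become isolated). -/
def contractGraph (G : SimpleGraph V) (s : V) (A : Set V) : SimpleGraph V where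
  Adj u v := u ∉ A ∧ v ∉ A ∧ u ≠ v ∧
    (G.Adj u v ∨ (u = s ∧ ∃ a ∈ A, G.Adj a v) ∨ (v = s ∧ ∃ a ∈ A, G.Adj a u))
  symm := by
    refine ⟨?_⟩
    rintro u v ⟨hu, hv, hne, h⟩
    refine ⟨hv, hu, hne.symm, ?_⟩
    rcases h with h | h | h
    · exact Or.inl h.symm
    · exact Or.inr (Or.inr h)
    · exact Or.inr (Or.inl h)
  loopless := by
    refine ⟨?_⟩
    rintro u ⟨_, _, hne, _⟩
    exact hne rfl

/-- The graph obtained from `G` by adding all edges from `s` to `N_G[A]`. -/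
def addApex (G : SimpleGraph V) (s : V) (A : Set V) : SimpleGraph V where
  Adj u v := G.Adj u v ∨
    (u = s ∧ v ≠ s ∧ v ∈ A ∪ nbhd G A) ∨
    (v = s ∧ u ≠ s ∧ u ∈ A ∪ nbhd G A)
  symm := by
    refine ⟨?_⟩
    rintro u v (h | h | h)
    · exact Or.inl h.symm
    · exact Or.inr (Or.inr h)
    · exact Or.inr (Or.inl h)
  loopless := by
    refine ⟨?_⟩
    rintro u (h | ⟨h1, h2, _⟩ | ⟨h1, h2, _⟩)
    · exact G.irrefl h
    · exact h2 h1
    · exact h2 h1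

/-- The graph obtained from `G` by subdividing every edge. -/
def subdiv (G : SimpleGraph V) : SimpleGraph (V ⊕ G.edgeSet) where
  Adj x y :=
    match x, y with
    | Sum.inl u, Sum.inr e => u ∈ (e : Sym2 V)
    | Sum.inr e, Sum.inl u => u ∈ (e : Sym2 V)
    | _, _ => False
  symm := by
    refine ⟨?_⟩
    rintro (u | e) (v | f) h <;> exact h
  loopless := by
    refine ⟨?_⟩
    rintro (u | e) h <;> exact h

/-- The instance `2Dis(G,A,B)` of 2-Disjoint-Connected-Subgraphs has a solution. -/
def TwoDisSolvable (G : SimpleGraph V) (A B : Set V) : Prop :=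
  ∃ A₁ B₁ : Set V, Disjoint A₁ B₁ ∧ A ⊆ A₁ ∧ B ⊆ B₁ ∧
    ConnIn G A₁ ∧ ConnIn G B₁

/-! The `s`-component of `H − S` equals that of `G − S` as soon as the latter contains `A`, since
then every new edge `s v` with `v ∈ N[A]` can be replaced by a walk of `G − S`; so `H` and `G` have the same
minimal `s,t`-separators `S` with `A ⊆ C_s(G − S)`, with the same `s`-components. Among the
minimal `s,t`-separators of any graph, one contained in `N(s)` has the smallest `s`-component:
a vertex `y` of `C_s(G − S₁) ∩ T` would be joined to `t` through the full component
`C_t(G − T)`, which would then meet `S₁ ⊆ N(s)` and contain `s`. A minimal separator is the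
neighbourhood of its `s`-component, which gives uniqueness. -/

open SimpleGraph

section ReachAvoid

variable {G : SimpleGraph V} {S T : Set V} {s t u v : V}

lemma ReachAvoid.symm (h : ReachAvoid G S u v) : ReachAvoid G S v u := by
  obtain ⟨w, hw⟩ := h
  exact ⟨w.reverse, fun x hx => hw x (by simpa using hx)⟩

lemma reachAvoid_self (hu : u ∉ S) : ReachAvoid G S u u :=
  ⟨Walk.nil, by simpa using hu⟩

lemma ReachAvoid.concat (h : ReachAvoid G S u v) {x : V} (hvx : G.Adj v x) (hx : x ∉ S) :
    ReachAvoid G S u x := by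
  obtain ⟨w, hw⟩ := h
  refine ⟨w.concat hvx, fun y hy => ?_⟩
  rcases List.mem_append.mp ((w.support_concat hvx) ▸ hy) with hy | hy
  · exact hw y hy
  · exact (List.mem_singleton.mp hy) ▸ hx

lemma mem_compOf_of_mem_support (w : G.Walk s v) (hw : ∀ x ∈ w.support, x ∉ S) {x : V}
    (hx : x ∈ w.support) : x ∈ compOf G S s := by
  classical
  exact ⟨w.takeUntil x hx, fun y hy => hw y (w.support_takeUntil_subset_support hx hy)⟩

lemma compOf_subset_of_closed {C : Set V} (hs : s ∈ C)
    (hC : ∀ x ∈ C, ∀ y, G.Adj x y → y ∉ S → y ∈ C) : compOf G S s ⊆ C := by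
  rintro v ⟨w, hw⟩
  induction w with
  | nil => exact hs
  | cons h p ih =>
    exact ih (hC _ hs _ h (hw _ (by simp))) fun x hx => hw x (by simp [hx])

lemma compOf_anti (h : T ⊆ S) : compOf G S s ⊆ compOf G T s :=
  fun _ ⟨w, hw⟩ => ⟨w, fun x hx hxT => hw x hx (h hxT)⟩

lemma compOf_subset_compOf_of_disjoint (h : Disjoint (compOf G S s) T) :
    compOf G S s ⊆ compOf G T s := by
  rintro v ⟨w, hw⟩
  exact ⟨w, fun x hx hxT => h.notMem_of_mem_left (mem_compOf_of_mem_support w hw hx) hxT⟩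

lemma exists_mem_support_mem_nbhd (w : G.Walk u v) {X : Set V} (hu : u ∈ X) (hv : v ∉ X) :
    ∃ z ∈ w.support, z ∈ nbhd G X := by
  obtain ⟨d, hd, hfst, hsnd⟩ := w.exists_boundary_dart X hu hv
  exact ⟨d.snd, w.dart_snd_mem_support_of_mem_darts hd, hsnd, d.fst, hfst, d.adj⟩

end ReachAvoid

section MinSep

variable {G : SimpleGraph V} {S T : Set V} {s t : V}

lemma IsSep.symm (h : IsSep G s t S) : IsSep G t s S :=
  ⟨h.2.1, h.1, fun hts => h.2.2 hts.symm⟩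

lemma IsMinSep.symm (h : IsMinSep G s t S) : IsMinSep G t s S :=
  ⟨h.1.symm, fun S' hS' hsep => h.2 S' hS' hsep.symm⟩

lemma IsMinSep.eq_nbhd_compOf (h : IsMinSep G s t S) : S = nbhd G (compOf G S s) := by
  obtain ⟨⟨hs, ht, hsep⟩, hmin⟩ := h
  ext z
  refine ⟨fun hz => ?_, fun ⟨hzC, x, hxC, hxz⟩ => ?_⟩
  · obtain ⟨w, hw⟩ : ReachAvoid G (S \ {z}) s t := by
      by_contra hst
      exact hmin _ (Set.sdiff_singleton_ssubset.mpr hz) ⟨fun h => hs h.1, fun h => ht h.1, hst⟩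
    obtain ⟨y, hyw, hyC, x, hxC, hxy⟩ :=
      exists_mem_support_mem_nbhd (X := compOf G S s) w (reachAvoid_self hs) hsep
    have hyS : y ∈ S := by_contra fun hyS => hyC (hxC.concat hxy hyS)
    have hyz : y = z := by_contra fun hyz => hw y hyw ⟨hyS, hyz⟩
    exact hyz ▸ ⟨hyC, x, hxC, hxy⟩
  · by_contra hzS
    exact hzC (hxC.concat hxz hzS)

lemma IsMinSep.eq_of_compOf_eq (hS : IsMinSep G s t S) (hT : IsMinSep G s t T)
    (h : compOf G S s = compOf G T s) : S = T := by
  rw [hS.eq_nbhd_compOf, hT.eq_nbhd_compOf, h]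

lemma IsMinSep.compOf_subset_of_subset_neighborSet (hS : IsMinSep G s t S)
    (hSN : S ⊆ G.neighborSet s) (hT : IsMinSep G s t T) : compOf G S s ⊆ compOf G T s := by
  refine compOf_subset_compOf_of_disjoint (Set.disjoint_left.mpr fun y hyC hyT => ?_)
  obtain ⟨-, x, ⟨p, hp⟩, hxy⟩ := hT.symm.eq_nbhd_compOf ▸ hyT
  obtain ⟨z, hzq, hzC, hzS⟩ := exists_mem_support_mem_nbhd (p.concat hxy).reverse hyC
    hS.1.2.2
  have hzp : z ∈ p.support := by
    rw [Walk.support_reverse, List.mem_reverse, Walk.support_concat, List.mem_append,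
      List.mem_singleton] at hzq
    exact hzq.resolve_right (by rintro rfl; exact hzC hyC)
  have hsz : G.Adj s z := hSN (hS.eq_nbhd_compOf ▸ ⟨hzC, hzS⟩)
  exact hT.1.2.2 ((mem_compOf_of_mem_support p hp hzp).concat hsz.symm hT.1.1).symm

end MinSep

section AddApex

variable {G : SimpleGraph V} {s t : V} {A S : Set V}

lemma compOf_addApex_eq (hs : s ∉ S) (hA : A ⊆ compOf G S s) :
    compOf (addApex G s A) S s = compOf G S s := by
  refine subset_antisymm (compOf_subset_of_closed (reachAvoid_self hs) ?_)
    (compOf_subset_of_closed (reachAvoid_self hs) fun x hx y hxy hy => hx.concat (Or.inl hxy) hy)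
  rintro x hx y (hxy | ⟨rfl, -, hyA | ⟨-, a, ha, hay⟩⟩ | ⟨rfl, -, -⟩) hy
  · exact hx.concat hxy hy
  · exact hA hyA
  · exact (hA ha).concat hay hy
  · exact reachAvoid_self hs

lemma isSep_addApex_iff (hA : A ⊆ compOf G S s) : IsSep (addApex G s A) s t S ↔ IsSep G s t S :=
  and_congr_right fun hs => and_congr_right fun _ =>
    not_congr (Set.ext_iff.mp (compOf_addApex_eq hs hA) t)

lemma isMinSep_addApex_iff (hA : A ⊆ compOf G S s) :
    IsMinSep (addApex G s A) s t S ↔ IsMinSep G s t S :=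
  and_congr (isSep_addApex_iff hA) (forall₂_congr fun _ hS' =>
    not_congr (isSep_addApex_iff (hA.trans (compOf_anti hS'.subset))))

end AddApex

theorem stmt13_general (G : SimpleGraph V) (s t : V) (A : Set V)
    (S₁ : Set V) (hS₁ : IsMinSep (addApex G s A) s t S₁)
    (hS₁N : S₁ ⊆ (addApex G s A).neighborSet s)
    (hAC : A ⊆ compOf G S₁ s) :
    IsMinSep G s t S₁ ∧ CloseTo G s t A S₁ ∧
      ∀ S' : Set V, CloseTo G s t A S' → S' = S₁ := by
  have hG : IsMinSep G s t S₁ := (isMinSep_addApex_iff hAC).1 hS₁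
  have hsmallest :
      ∀ T, IsMinSep G s t T → A ⊆ compOf G T s → compOf G S₁ s ⊆ compOf G T s := by
    intro T hT hAT
    have h := hS₁.compOf_subset_of_subset_neighborSet hS₁N ((isMinSep_addApex_iff hAT).2 hT)
    rwa [compOf_addApex_eq hG.1.1 hAC, compOf_addApex_eq hT.1.1 hAT] at h
  refine ⟨hG, ⟨hG, hAC, fun T hT hne hAT hsub => ?_⟩, fun S' hS' => ?_⟩
  · exact hne (hT.eq_of_compOf_eq hG (hsub.antisymm (hsmallest T hT hAT)))
  · by_contra hne
    exact hS'.2.2 S₁ hG (Ne.symm hne) hAC (hsmallest S' hS'.1 hS'.2.1)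

theorem stmt13 (G : SimpleGraph V) (hconn : G.Connected) (hat : IsATFree G)
    (s t : V) (hst : s ≠ t) (hadj : ¬ G.Adj s t)
    (hN : G.neighborSet s ∩ G.neighborSet t = ∅)
    (A : Set V) (hsA : s ∉ A) (htA : t ∉ A)
    (hAt : insert s A ∩ clNbhd G t = ∅)
    (S₁ : Set V) (hS₁ : IsMinSep (addApex G s A) s t S₁)
    (hS₁N : S₁ ⊆ (addApex G s A).neighborSet s)
    (hAC : A ⊆ compOf G S₁ s) :
    IsMinSep G s t S₁ ∧ CloseTo G s t A S₁ ∧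
      ∀ S' : Set V, CloseTo G s t A S' → S' = S₁ :=
  stmt13_general G s t A S₁ hS₁ hS₁N hAC
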